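/- arXiv:1311.2774 — 5 statements merged into one kernel-verified Lean document; each statement's English description precedes it below -/
import Mathlib

section
/- Let p be a prime and R a perfect 𝔽_p-algebra. Then C(R) is a strict p-ring with residue ring R: the element p is not a zero divisor in C(R), and for every n ≥ 1 the ideal Î^n (the kernel of the projection C(R) → ℤR/I^n) equals p^n·C(R); in particular C(R)/p·C(R) is isomorphic to R via the map induced by π. -/
set_option synthInstance.maxHeartbeats 1000000
set_option maxHeartbeats 1000000

open MonoidAlgebra

/-- `ℤR`: the monoid algebra over `ℤ` of the multiplicative monoid `(R, ·)`. -/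
abbrev ZR (R : Type*) [CommRing R] : Type _ := MonoidAlgebra ℤ R

/-- The canonical ring homomorphism `π : ℤR → R`, `Σ n_r [r] ↦ Σ n_r r`. -/
noncomputable def piHom (R : Type*) [CommRing R] : ZR R →+* R :=
  (MonoidAlgebra.lift ℤ R R (MonoidHom.id R)).toRingHom

/-- The ideal `I = ker (π : ℤR → R)`. -/
noncomputable def Iid (R : Type*) [CommRing R] : Ideal (ZR R) := RingHom.ker (piHom R)

/-- The inverse limit `lim_ν A⧸I^ν` realized as a subring of the product `Π ν, A⧸I^ν`
(families compatible under the canonical factor maps). -/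
def Clim (A : Type*) [CommRing A] (I : Ideal A) : Subring (Π ν : ℕ, A ⧸ I ^ ν) where
  carrier := { x | ∀ ⦃m ν : ℕ⦄ (h : m ≤ ν),
    Ideal.Quotient.factor (Ideal.pow_le_pow_right h) (x ν) = x m }
  zero_mem' := by intro m ν h; simp
  one_mem' := by intro m ν h; simp
  add_mem' := by intro x y hx hy m ν h; simp only [Pi.add_apply, map_add, hx h, hy h]
  mul_mem' := by intro x y hx hy m ν h; simp only [Pi.mul_apply, map_mul, hx h, hy h]
  neg_mem' := by intro x hx m ν h; simp only [Pi.neg_apply, map_neg, hx h]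

/-- The projection of the completion `lim_ν A⧸I^ν` onto its `ν`-th level `A⧸I^ν`. -/
def Ceval (A : Type*) [CommRing A] (I : Ideal A) (ν : ℕ) : Clim A I →+* A ⧸ I ^ ν :=
  (Pi.evalRingHom _ ν).comp (Clim A I).subtype

/-- The canonical map `A → lim_ν A⧸I^ν`. -/
def CofRingHom (A : Type*) [CommRing A] (I : Ideal A) : A →+* Clim A I where
  toFun a := ⟨fun ν => Ideal.Quotient.mk _ a, fun _ _ _ => Ideal.Quotient.factor_mk _ _⟩
  map_one' := rfl
  map_mul' _ _ := rfl
  map_zero' := rfl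
  map_add' _ _ := rfl

/-- `C(R)`: the `I`-adic completion of `ℤR`. -/
noncomputable abbrev CR (R : Type*) [CommRing R] : Type _ := Clim (ZR R) (Iid R)

/-- The canonical projection `π̄ : C(R) → R` induced by `π`. -/
noncomputable def CtoR (R : Type*) [CommRing R] : CR R →+* R :=
  (Ideal.Quotient.lift (Iid R) (piHom R) (fun _ ha => ha)).comp
    (((Ideal.quotEquivOfEq (pow_one (Iid R))).toRingHom).comp (Ceval (ZR R) (Iid R) 1))

/-!
Modulo `p` one has `([u] + [v])^p ≡ [u]^p + [v]^p`, and `x^p - y^p ∈ pℤR + I²` whenever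
`x - y ∈ I`; as Frobenius is surjective, every generator `[x] + [y] - [x + y]` of `I` is of the form
`[u]^p + [v]^p - [u + v]^p` and so lies in `pℤR + I²`. Hence `I^n ⊆ p^n ℤR + I^(n+1)`, and
successive approximation writes every element of `Î^n` as `p^n` times an element of `C(R)`.

For `p`-torsion freeness, the Teichmüller map `ℤR → W(R)` pulls `p W(R)` back to `I`, and `p` is a
non-zero-divisor in `W(R)`; hence `p^m a ∈ I^(m+1)` forces `a ∈ I`. So if `p x = 0` and
`x = p^n y`, then `p^(n+1) y = 0` gives `y ∈ Î = p C(R)`, i.e. `x ∈ p^(n+1) C(R)`; thus `x` lies in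
every `Î^n`.
-/
namespace Ideal

variable {A : Type*} [CommRing A]

theorem pow_sub_pow_mem_span_sup_sq {I : Ideal A} {x y : A} (h : x - y ∈ I) (n : ℕ) :
    x ^ n - y ^ n ∈ span {(n : A)} ⊔ I ^ 2 := by
  obtain ⟨k, hk⟩ := (Polynomial.X ^ n : Polynomial A).binomExpansion y (x - y)
  simp only [Polynomial.eval_pow, Polynomial.eval_X, add_sub_cancel, Polynomial.derivative_X_pow,
    Polynomial.eval_mul, Polynomial.eval_C] at hk
  rw [hk, add_assoc, add_sub_cancel_left]
  refine add_mem (mem_sup_left ?_) (mem_sup_right ?_)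
  · exact mem_span_singleton.2 ⟨y ^ (n - 1) * (x - y), by ring⟩
  · exact mul_mem_left _ _ (pow_mem_pow h 2)

theorem pow_le_pow_sup_pow_succ {I J : Ideal A} (hJ : J ≤ I) (hI : I ≤ J ⊔ I ^ 2) (n : ℕ) :
    I ^ n ≤ J ^ n ⊔ I ^ (n + 1) := by
  induction n with
  | zero => simp
  | succ n ih =>
    have hJI : I ^ 2 * J ^ n ≤ I ^ (n + 2) := by
      rw [add_comm n, pow_add]; exact mul_mono_right (pow_right_mono hJ n)
    calc I ^ (n + 1) = I * I ^ n := pow_succ' _ _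
      _ ≤ I * (J ^ n ⊔ I ^ (n + 1)) := mul_mono_right ih
      _ = I * J ^ n ⊔ I ^ (n + 2) := by rw [mul_sup, ← pow_succ']
      _ ≤ (J ⊔ I ^ 2) * J ^ n ⊔ I ^ (n + 2) := sup_le_sup_right (mul_mono_left hI) _
      _ = J ^ (n + 1) ⊔ I ^ 2 * J ^ n ⊔ I ^ (n + 2) := by rw [sup_mul, ← pow_succ']
      _ ≤ J ^ (n + 1) ⊔ I ^ (n + 2) :=
        sup_le (sup_le le_sup_left (hJI.trans le_sup_right)) le_sup_right

theorem mem_of_pow_mul_mem_pow_succ {B : Type*} [CommRing B] (f : A →+* B) {I : Ideal A}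
    {t : A} (hI : I = (span {f t}).comap f) (ht : f t ∈ nonZeroDivisors B) {m : ℕ} {a : A}
    (h : t ^ m * a ∈ I ^ (m + 1)) : a ∈ I := by
  have hmap : f (t ^ m * a) ∈ span {f t ^ (m + 1)} := by
    rw [← span_singleton_pow]
    refine pow_right_mono (map_le_iff_le_comap.2 hI.le) _ ?_
    rw [← Ideal.map_pow]
    exact mem_map_of_mem f h
  obtain ⟨w, hw⟩ := mem_span_singleton.1 hmap
  have hcancel : (f a - f t * w) * f t ^ m = 0 := by
    rw [map_mul, map_pow] at hw
    linear_combination hw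
  rw [hI, mem_comap, mem_span_singleton]
  exact ⟨w, sub_eq_zero.1 ((mul_right_mem_nonZeroDivisors_eq_zero_iff (pow_mem ht m)).1 hcancel)⟩

end Ideal

namespace Clim

variable {A : Type*} [CommRing A] {I : Ideal A}

theorem ext {x y : Clim A I} (h : ∀ ν, Ceval A I ν x = Ceval A I ν y) : x = y :=
  Subtype.ext (funext h)

theorem factor_Ceval {m ν : ℕ} (h : m ≤ ν) (x : Clim A I) :
    Ideal.Quotient.factor (Ideal.pow_le_pow_right h) (Ceval A I ν x) = Ceval A I m x :=
  x.2 h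

theorem Ceval_CofRingHom (ν : ℕ) (a : A) :
    Ceval A I ν (CofRingHom A I a) = Ideal.Quotient.mk _ a :=
  rfl

theorem ker_Ceval_antitone : Antitone fun ν => RingHom.ker (Ceval A I ν) :=
  fun m ν h x hx => by rw [RingHom.mem_ker, ← factor_Ceval h, RingHom.mem_ker.1 hx, map_zero]

def ofSeq (s : ℕ → A) (hs : ∀ ν, s (ν + 1) - s ν ∈ I ^ ν) : Clim A I :=
  ⟨fun ν => Ideal.Quotient.mk _ (s ν), fun m ν h => by
    rw [Ideal.Quotient.factor_mk, Ideal.Quotient.mk_eq_mk_iff_sub_mem]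
    induction ν, h using Nat.le_induction with
    | base => simp
    | succ ν hmν ih =>
      rw [← sub_add_sub_cancel _ (s ν)]
      exact add_mem (Ideal.pow_le_pow_right hmν (hs ν)) ih⟩

theorem exists_sub_mem_ker_Ceval_succ {t : A} {m : ℕ}
    (hI : I ^ m ≤ Ideal.span {t ^ m} ⊔ I ^ (m + 1)) {x : Clim A I}
    (hx : x ∈ RingHom.ker (Ceval A I m)) :
    ∃ a : A, x - CofRingHom A I (t ^ m * a) ∈ RingHom.ker (Ceval A I (m + 1)) := by
  obtain ⟨b, hb⟩ := Ideal.Quotient.mk_surjective (Ceval A I (m + 1) x)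
  have hbI : b ∈ I ^ m := by
    rw [← Ideal.Quotient.eq_zero_iff_mem, ← Ideal.Quotient.factor_mk (Ideal.pow_le_pow_right
      m.le_succ), hb, factor_Ceval m.le_succ, RingHom.mem_ker.1 hx]
  obtain ⟨_, ht, j, hj, rfl⟩ := Submodule.mem_sup.1 (hI hbI)
  obtain ⟨a, rfl⟩ := Ideal.mem_span_singleton'.1 ht
  refine ⟨a, ?_⟩
  rw [RingHom.mem_ker, map_sub, ← hb, Ceval_CofRingHom, ← map_sub, mul_comm,
    add_sub_cancel_left, Ideal.Quotient.eq_zero_iff_mem]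
  exact hj

variable {t : A}

theorem mem_span_pow_of_mem_ker_Ceval (ht : t ∈ I) (hI : I ≤ Ideal.span {t} ⊔ I ^ 2) {n : ℕ}
    {x : Clim A I} (hx : x ∈ RingHom.ker (Ceval A I n)) :
    x ∈ Ideal.span {CofRingHom A I t ^ n} := by
  have hpow (m : ℕ) : I ^ m ≤ Ideal.span {t ^ m} ⊔ I ^ (m + 1) := by
    rw [← Ideal.span_singleton_pow]
    exact Ideal.pow_le_pow_sup_pow_succ ((Ideal.span_singleton_le_iff_mem _).2 ht) hI m
  choose! a ha using fun K (r : Clim A I) (hr : r ∈ RingHom.ker (Ceval A I (n + K))) =>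
    exists_sub_mem_ker_Ceval_succ (hpow (n + K)) hr
  -- `s K` is a partial sum of the quotient `x / t ^ n`, correct modulo `I ^ (n + K)`.
  let s : ℕ → A := fun K =>
    Nat.rec 0 (fun K sK => sK + t ^ K * a K (x - CofRingHom A I (t ^ n * sK))) K
  have hs_succ (K : ℕ) : s (K + 1) - s K ∈ I ^ K := by
    rw [show s (K + 1) = s K + t ^ K * _ from rfl, add_sub_cancel_left]
    exact Ideal.mul_mem_right _ _ (Ideal.pow_mem_pow ht K)
  have hs_ker (K : ℕ) : x - CofRingHom A I (t ^ n * s K) ∈ RingHom.ker (Ceval A I (n + K)) := by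
    induction K with
    | zero => simpa [s] using hx
    | succ K ih =>
      rw [show s (K + 1) = s K + t ^ K * _ from rfl, mul_add, ← mul_assoc, ← pow_add, map_add,
        ← sub_sub]
      exact ha K _ ih
  refine Ideal.mem_span_singleton'.2 ⟨ofSeq s hs_succ, ext fun ν => ?_⟩
  have hν := ker_Ceval_antitone (Nat.le_add_left ν n) (hs_ker ν)
  rw [RingHom.mem_ker, map_sub, sub_eq_zero] at hν
  rw [hν, mul_comm, map_mul, map_pow, map_mul, map_pow]
  rfl

theorem ker_Ceval_eq_span_pow (ht : t ∈ I) (hI : I ≤ Ideal.span {t} ⊔ I ^ 2) (n : ℕ) :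
    RingHom.ker (Ceval A I n) = Ideal.span {CofRingHom A I t ^ n} := by
  refine le_antisymm (fun x hx => mem_span_pow_of_mem_ker_Ceval ht hI hx) ?_
  rw [Ideal.span_singleton_le_iff_mem, RingHom.mem_ker, ← map_pow, Ceval_CofRingHom,
    Ideal.Quotient.eq_zero_iff_mem]
  exact Ideal.pow_mem_pow ht n

theorem mem_ker_Ceval_one_of_pow_mul_eq_zero
    (hreg : ∀ (m : ℕ) (a : A), t ^ m * a ∈ I ^ (m + 1) → a ∈ I) {m : ℕ} {y : Clim A I}
    (hy : CofRingHom A I t ^ m * y = 0) : y ∈ RingHom.ker (Ceval A I 1) := by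
  obtain ⟨a, ha⟩ := Ideal.Quotient.mk_surjective (Ceval A I (m + 1) y)
  have hta : t ^ m * a ∈ I ^ (m + 1) := by
    rw [← Ideal.Quotient.eq_zero_iff_mem, map_mul, map_pow, ha, ← Ceval_CofRingHom, ← map_pow,
      ← map_mul, hy, map_zero]
  rw [RingHom.mem_ker, ← factor_Ceval (Nat.le_add_left 1 m), ← ha, Ideal.Quotient.factor_mk,
    Ideal.Quotient.eq_zero_iff_mem, pow_one]
  exact hreg m a hta

theorem CofRingHom_mem_nonZeroDivisors (ht : t ∈ I) (hI : I ≤ Ideal.span {t} ⊔ I ^ 2)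
    (hreg : ∀ (m : ℕ) (a : A), t ^ m * a ∈ I ^ (m + 1) → a ∈ I) :
    CofRingHom A I t ∈ nonZeroDivisors (Clim A I) := by
  rw [mem_nonZeroDivisors_iff_left]
  intro x hx
  have hx_ker (n : ℕ) : x ∈ RingHom.ker (Ceval A I n) := by
    induction n with
    | zero => simp [ker_Ceval_eq_span_pow ht hI]
    | succ n ih =>
      rw [ker_Ceval_eq_span_pow ht hI, Ideal.mem_span_singleton'] at ih ⊢
      obtain ⟨y, rfl⟩ := ih
      have hy : CofRingHom A I t ^ (n + 1) * y = 0 := by rw [← hx]; ring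
      have := mem_ker_Ceval_one_of_pow_mul_eq_zero hreg hy
      rw [ker_Ceval_eq_span_pow ht hI, pow_one, Ideal.mem_span_singleton'] at this
      obtain ⟨z, rfl⟩ := this
      exact ⟨z, by ring⟩
  exact ext fun ν => by rw [RingHom.mem_ker.1 (hx_ker ν), map_zero]

end Clim

section GroupRing

variable {R : Type*} [CommRing R]

theorem piHom_of (r : R) : piHom R (of ℤ R r) = r := by
  simp [piHom]

theorem piHom_surjective : Function.Surjective (piHom R) :=
  fun r => ⟨of ℤ R r, piHom_of r⟩

theorem Iid_le_of_forall_of_add_sub_mem {J : Ideal (ZR R)}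
    (hJ : ∀ x y : R, of ℤ R x + of ℤ R y - of ℤ R (x + y) ∈ J) : Iid R ≤ J := by
  -- Modulo `J` the map `r ↦ [r]` is additive, so the projection `ℤR → ℤR ⧸ J` factors through `π`.
  let σ : R →+* ZR R ⧸ J := RingHom.mk' ((Ideal.Quotient.mk J : ZR R →* ZR R ⧸ J).comp (of ℤ R))
    fun x y => by
      change Ideal.Quotient.mk J (of ℤ R (x + y)) =
        Ideal.Quotient.mk J (of ℤ R x) + Ideal.Quotient.mk J (of ℤ R y)
      rw [← map_add, Ideal.Quotient.mk_eq_mk_iff_sub_mem, ← neg_mem_iff, neg_sub]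
      exact hJ x y
  have hσ : σ.comp (piHom R) = Ideal.Quotient.mk J :=
    ringHom_ext' (RingHom.ext_int _ _) (MonoidHom.ext fun r => congrArg σ (piHom_of r))
  intro f hf
  rw [← Ideal.Quotient.eq_zero_iff_mem, ← hσ, RingHom.comp_apply, RingHom.mem_ker.1 hf, map_zero]

theorem of_add_sub_of_add_mem_span_sup_sq (p : ℕ) [Fact p.Prime] [CharP R p]
    (hsurj : Function.Surjective fun x : R => x ^ p) (x y : R) :
    of ℤ R x + of ℤ R y - of ℤ R (x + y) ∈ Ideal.span {(p : ZR R)} ⊔ Iid R ^ 2 := by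
  obtain ⟨u, rfl⟩ := hsurj x
  obtain ⟨v, rfl⟩ := hsurj y
  obtain ⟨c, hc⟩ := exists_add_pow_prime_eq (Fact.out : p.Prime) (of ℤ R u) (of ℤ R v)
  have hI : of ℤ R u + of ℤ R v - of ℤ R (u + v) ∈ Iid R := by
    rw [Iid, RingHom.mem_ker, map_sub, map_add, piHom_of, piHom_of, piHom_of, sub_self]
  have key : of ℤ R (u ^ p) + of ℤ R (v ^ p) - of ℤ R (u ^ p + v ^ p) =
      ((of ℤ R u + of ℤ R v) ^ p - of ℤ R (u + v) ^ p) - p * (of ℤ R u * of ℤ R v * c) := by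
    rw [← add_pow_char, map_pow, map_pow, map_pow, hc]
    ring
  rw [key]
  exact sub_mem (Ideal.pow_sub_pow_mem_span_sup_sq hI p)
    (Ideal.mem_sup_left (Ideal.mem_span_singleton'.2 ⟨_, mul_comm _ _⟩))

theorem natCast_mem_Iid (p : ℕ) [CharP R p] : (p : ZR R) ∈ Iid R := by
  simp [Iid, RingHom.mem_ker]

noncomputable def toWitt (p : ℕ) [Fact p.Prime] (R : Type*) [CommRing R] :
    ZR R →+* WittVector p R :=
  (MonoidAlgebra.lift ℤ (WittVector p R) R (WittVector.teichmuller p)).toRingHom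

theorem constantCoeff_comp_toWitt (p : ℕ) [Fact p.Prime] :
    WittVector.constantCoeff.comp (toWitt p R) = piHom R :=
  ringHom_ext' (RingHom.ext_int _ _) (MonoidHom.ext fun r => by simp [toWitt, piHom])

theorem Iid_eq_comap_toWitt (p : ℕ) [Fact p.Prime] [CharP R p] [PerfectRing R p] :
    Iid R = (Ideal.span {toWitt p R p}).comap (toWitt p R) := by
  rw [map_natCast, ← WittVector.ker_constantCoeff, RingHom.comap_ker, constantCoeff_comp_toWitt]
  rfl

theorem CtoR_surjective : Function.Surjective (CtoR R) :=
  fun r => ⟨CofRingHom (ZR R) (Iid R) (of ℤ R r), piHom_of r⟩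

theorem ker_CtoR : RingHom.ker (CtoR R) = RingHom.ker (Ceval (ZR R) (Iid R) 1) := by
  have hlift : Function.Injective (Ideal.Quotient.lift (Iid R) (piHom R) fun _ ha => ha) :=
    RingHom.lift_injective_of_ker_le_ideal _ _ le_rfl
  rw [CtoR, RingHom.ker_comp_of_injective _ hlift,
    RingHom.ker_comp_of_injective _ (RingEquiv.injective _)]

end GroupRing

/-- Let `p` be a prime and `R` a perfect `𝔽_p`-algebra. Then `C(R)` is a
strict `p`-ring with residue ring `R`: `p` is not a zero divisor in `C(R)`; for every `n ≥ 1`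
the ideal `Î^n = ker (C(R) → ℤR/I^n)` equals `p^n·C(R)`; and the map `π̄ : C(R) → R` induced
by `π` is surjective with kernel `p·C(R)`, i.e. `C(R)/p·C(R) ≅ R` via `π`. -/
theorem statement0 (p : ℕ) [Fact p.Prime] (R : Type*) [CommRing R] [CharP R p]
    (hperf : Function.Bijective fun x : R => x ^ p) :
    (∀ x : CR R, (p : CR R) * x = 0 → x = 0) ∧
    (∀ n : ℕ, 1 ≤ n →
      RingHom.ker (Ceval (ZR R) (Iid R) n) = Ideal.span {(p : CR R) ^ n}) ∧
    Function.Surjective (CtoR R) ∧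
    RingHom.ker (CtoR R) = Ideal.span {(p : CR R)} := by
  have : PerfectRing R p := ⟨hperf⟩
  have hp := natCast_mem_Iid (R := R) p
  have hI : Iid R ≤ Ideal.span {(p : ZR R)} ⊔ Iid R ^ 2 :=
    Iid_le_of_forall_of_add_sub_mem (of_add_sub_of_add_mem_span_sup_sq p hperf.2)
  have hker (n : ℕ) : RingHom.ker (Ceval (ZR R) (Iid R) n) = Ideal.span {(p : CR R) ^ n} := by
    rw [Clim.ker_Ceval_eq_span_pow hp hI, map_natCast]
  have hreg : toWitt p R p ∈ nonZeroDivisors (WittVector p R) := by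
    rw [map_natCast]
    exact mem_nonZeroDivisors_iff_right.2 WittVector.eq_zero_of_p_mul_eq_zero
  refine ⟨?_, fun n _ => hker n, CtoR_surjective, by rw [ker_CtoR, hker, pow_one]⟩
  refine mem_nonZeroDivisors_iff_left.1 ?_
  rw [← map_natCast (CofRingHom (ZR R) (Iid R))]
  exact Clim.CofRingHom_mem_nonZeroDivisors hp hI fun _ _ =>
    Ideal.mem_of_pow_mul_mem_pow_succ (toWitt p R) (Iid_eq_comap_toWitt p) hreg
end

section
/- Let p be a prime, R a perfect 𝔽_p-algebra, and n ≥ 1 an integer. If a ∈ ℤR satisfies p·a ∈ I^n, then a ∈ I^{n−1}. -/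
/-!
The Teichmüller map `r ↦ [r]` extends to a ring homomorphism `θ : ℤR → W(R)` lifting `π`, and
for `R` perfect `I^n` is exactly `θ⁻¹(p^n W(R))`. The inclusion `θ(I) ⊆ p W(R)` holds because
`p W(R)` is the kernel of `W(R) → R`. Conversely, `I ⊆ (p) + I^(n+1)` for every `n`, because
`[a + b] - [a] - [b]` is a `p`-th power of an element of `I` modulo `p` once `a` and `b` are
written as `p`-th powers; so if `θ(x) ∈ p^(n+1) W(R)`, write `x = p y + z` with `z ∈ I^(n+1)`,
cancel `p` in the `p`-torsion free ring `W(R)` to get `θ(y) ∈ p^n W(R)`, and induct. The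
theorem is this description of `I^n` combined with `p`-torsion freeness once more.
-/

open MonoidAlgebra

theorem add_pow_prime_sub_pow_sub_pow_mem_span {A : Type*} [CommRing A] {p : ℕ} (hp : p.Prime)
    (x y : A) :
    (x + y) ^ p - x ^ p - y ^ p ∈ Ideal.span {(p : A)} := by
  obtain ⟨r, hr⟩ := exists_add_pow_prime_eq hp x y
  exact Ideal.mem_span_singleton.mpr ⟨x * y * r, by rw [hr]; ring⟩

theorem Ideal.mem_span_singleton_pow_of_mul_mem {A : Type*} [CommSemiring A] {a x : A}
    (ha : IsLeftRegular a) {n : ℕ} (h : a * x ∈ Ideal.span {a} ^ (n + 1)) :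
    x ∈ Ideal.span {a} ^ n := by
  rw [Ideal.span_singleton_pow, Ideal.mem_span_singleton] at h ⊢
  obtain ⟨y, hy⟩ := h
  exact ⟨y, ha (show a * x = a * (a ^ n * y) by rw [hy]; ring)⟩

namespace WittVector

variable {p : ℕ} [Fact p.Prime] {k : Type*} [CommRing k] [CharP k p] [PerfectRing k p]

theorem isLeftRegular_p : IsLeftRegular (p : WittVector p k) :=
  isLeftRegular_of_non_zero_divisor _ fun x hx ↦ eq_zero_of_p_mul_eq_zero x (by rwa [mul_comm])

end WittVector

namespace ZR

noncomputable def teichmullerHom (p : ℕ) [Fact p.Prime] (R : Type*) [CommRing R] :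
    ZR R →+* WittVector p R :=
  (MonoidAlgebra.lift ℤ (WittVector p R) R (WittVector.teichmuller p)).toRingHom

variable {R : Type*} [CommRing R]

theorem piHom_of (r : R) : piHom R (of ℤ R r) = r := by
  simp [piHom]

theorem mem_Iid_iff (x : ZR R) : x ∈ Iid R ↔ piHom R x = 0 := RingHom.mem_ker

theorem Iid_le_of_of_add_sub_mem (J : Ideal (ZR R)) (h_zero : of ℤ R 0 ∈ J)
    (h_add : ∀ a b : R, of ℤ R (a + b) - of ℤ R a - of ℤ R b ∈ J) : Iid R ≤ J := by
  let s : R →+ ZR R ⧸ J :=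
    { toFun := fun r ↦ Ideal.Quotient.mk J (of ℤ R r)
      map_zero' := Ideal.Quotient.eq_zero_iff_mem.mpr h_zero
      map_add' := fun a b ↦ by
        rw [← sub_eq_zero, ← map_add, ← map_sub, Ideal.Quotient.eq_zero_iff_mem, ← sub_sub]
        exact h_add a b }
  have hs : ∀ x, Ideal.Quotient.mk J x = s (piHom R x) := fun x ↦ by
    induction x using MonoidAlgebra.induction_on with
    | of r => simp only [s, AddMonoidHom.coe_mk, ZeroHom.coe_mk, piHom_of]
    | add x y hx hy => rw [map_add, map_add, map_add, hx, hy]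
    | smul n x hx => rw [map_zsmul, map_zsmul, map_zsmul, hx]
  intro x hx
  rw [← Ideal.Quotient.eq_zero_iff_mem, hs, (mem_Iid_iff x).mp hx, map_zero]

theorem natCast_mem_Iid (p : ℕ) [CharP R p] : (p : ZR R) ∈ Iid R := by
  rw [mem_Iid_iff, map_natCast, CharP.cast_eq_zero]

variable (p : ℕ) [Fact p.Prime]

theorem constantCoeff_comp_teichmullerHom :
    WittVector.constantCoeff.comp (teichmullerHom p R) = piHom R := by
  refine MonoidAlgebra.ringHom_ext (fun n ↦ ?_) (fun r ↦ ?_) <;> simp [teichmullerHom, piHom]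

variable [CharP R p] [PerfectRing R p]

theorem Iid_le_span_p_sup_pow : Iid R ≤ Ideal.span {(p : ZR R)} ⊔ Iid R ^ p := by
  have hp : p.Prime := Fact.out
  apply Iid_le_of_of_add_sub_mem
  · rw [← zero_pow hp.ne_zero, map_pow]
    exact Ideal.mem_sup_right (Ideal.pow_mem_pow ((mem_Iid_iff _).mpr (piHom_of 0)) p)
  · intro a b
    obtain ⟨s, rfl⟩ := surjective_frobenius R p a
    obtain ⟨t, rfl⟩ := surjective_frobenius R p b
    -- modulo `p`, `[s^p + t^p] - [s^p] - [t^p]` is the `p`-th power of `[s + t] - [s] - [t] ∈ I`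
    set d := of ℤ R (s + t) - of ℤ R s - of ℤ R t
    have hd : d ∈ Iid R := by
      rw [mem_Iid_iff]; simp only [d, map_sub, piHom_of]; ring
    have key : of ℤ R (frobenius R p s + frobenius R p t) - of ℤ R (frobenius R p s)
        - of ℤ R (frobenius R p t)
        = ((of ℤ R s + of ℤ R t + d) ^ p - (of ℤ R s + of ℤ R t) ^ p - d ^ p)
          + ((of ℤ R s + of ℤ R t) ^ p - of ℤ R s ^ p - of ℤ R t ^ p) + d ^ p := by
      rw [frobenius_def, frobenius_def, ← add_pow_char, map_pow, map_pow, map_pow]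
      simp only [d]
      ring
    rw [key]
    exact add_mem (add_mem (Ideal.mem_sup_left (add_pow_prime_sub_pow_sub_pow_mem_span hp _ _))
      (Ideal.mem_sup_left (add_pow_prime_sub_pow_sub_pow_mem_span hp _ _)))
      (Ideal.mem_sup_right (Ideal.pow_mem_pow hd p))

theorem Iid_le_span_p_sup_pow_succ (N : ℕ) :
    Iid R ≤ Ideal.span {(p : ZR R)} ⊔ Iid R ^ (N + 1) := by
  have hI : Iid R ≤ Ideal.span {(p : ZR R)} ⊔ Iid R ^ 2 :=
    (Iid_le_span_p_sup_pow p).trans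
      (sup_le_sup_left (Ideal.pow_le_pow_right (Fact.out : p.Prime).two_le) _)
  induction N with
  | zero => exact le_sup_right.trans' (by rw [zero_add, pow_one])
  | succ N ih =>
    calc Iid R ≤ Ideal.span {(p : ZR R)} ⊔ Iid R ^ (N + 1) := ih
      _ ≤ Ideal.span {(p : ZR R)} ⊔ Iid R ^ N * (Ideal.span {(p : ZR R)} ⊔ Iid R ^ 2) := by
        rw [pow_succ]; exact sup_le_sup_left (Ideal.mul_mono_right hI) _
      _ ≤ Ideal.span {(p : ZR R)} ⊔ Iid R ^ (N + 1 + 1) := by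
        rw [Ideal.mul_sup, ← pow_add]
        exact sup_le le_sup_left (sup_le_sup Ideal.mul_le_right le_rfl)

theorem Iid_eq_comap_span_p :
    Iid R = (Ideal.span {(p : WittVector p R)}).comap (teichmullerHom p R) := by
  rw [← WittVector.ker_constantCoeff, RingHom.comap_ker, constantCoeff_comp_teichmullerHom]
  rfl

theorem Iid_pow_le_comap (n : ℕ) :
    Iid R ^ n ≤ (Ideal.span {(p : WittVector p R)} ^ n).comap (teichmullerHom p R) := by
  rw [← Ideal.map_le_iff_le_comap, Ideal.map_pow]
  exact Ideal.pow_right_mono (Ideal.map_le_iff_le_comap.mpr (Iid_eq_comap_span_p p).le) n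

theorem comap_le_Iid_pow (n : ℕ) :
    (Ideal.span {(p : WittVector p R)} ^ n).comap (teichmullerHom p R) ≤ Iid R ^ n := by
  induction n with
  | zero => simp
  | succ n ih =>
    intro a ha
    have haI : a ∈ Iid R := by
      rw [Iid_eq_comap_span_p p]
      exact Ideal.comap_mono (Ideal.pow_le_self n.succ_ne_zero) ha
    obtain ⟨x, hx, c, hc, rfl⟩ := Submodule.mem_sup.mp (Iid_le_span_p_sup_pow_succ p n haI)
    obtain ⟨b, rfl⟩ := Ideal.mem_span_singleton.mp hx
    have hpb : (p : WittVector p R) * teichmullerHom p R b ∈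
        Ideal.span {(p : WittVector p R)} ^ (n + 1) := by
      simpa using sub_mem ha (Iid_pow_le_comap p (n + 1) hc)
    have hb : b ∈ Iid R ^ n := ih (Ideal.mem_span_singleton_pow_of_mul_mem
      WittVector.isLeftRegular_p hpb)
    rw [pow_succ']
    exact add_mem (Ideal.mul_mem_mul (natCast_mem_Iid p) hb) (pow_succ' (Iid R) n ▸ hc)

theorem Iid_pow_eq_comap (n : ℕ) :
    Iid R ^ n = (Ideal.span {(p : WittVector p R)} ^ n).comap (teichmullerHom p R) :=
  le_antisymm (Iid_pow_le_comap p n) (comap_le_Iid_pow p n)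

end ZR

theorem statement1_general (p : ℕ) [Fact p.Prime] (R : Type*) [CommRing R] [CharP R p]
    (hperf : Function.Bijective fun x : R => x ^ p)
    (n : ℕ) (a : ZR R) (h : (p : ZR R) * a ∈ Iid R ^ n) :
    a ∈ Iid R ^ (n - 1) := by
  have : PerfectRing R p := ⟨hperf⟩
  rw [ZR.Iid_pow_eq_comap p, Ideal.mem_comap, map_mul, map_natCast] at h
  rw [ZR.Iid_pow_eq_comap p, Ideal.mem_comap]
  cases n with
  | zero => simp
  | succ m => exact Ideal.mem_span_singleton_pow_of_mul_mem WittVector.isLeftRegular_p h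

/-- Let `p` be a prime, `R` a perfect `𝔽_p`-algebra and `n ≥ 1` an integer.
If `a ∈ ℤR` satisfies `p·a ∈ I^n`, then `a ∈ I^(n-1)`. -/
theorem statement1 (p : ℕ) [Fact p.Prime] (R : Type*) [CommRing R] [CharP R p]
    (hperf : Function.Bijective fun x : R => x ^ p)
    (n : ℕ) (hn : 1 ≤ n) (a : ZR R) (h : (p : ZR R) * a ∈ Iid R ^ n) :
    a ∈ Iid R ^ (n - 1) :=
  statement1_general p R hperf n a h
end

section
/- Let p be a prime, R a perfect 𝔽_p-algebra, and n ≥ 1 an integer. Then for every ν ≥ n one has the equality of ideals I^n = I^ν + p^n·ℤR in ℤR. -/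
open MonoidAlgebra

/-!
Modulo `J = I² + p·ℤR` the map `r ↦ [r]` is additive: writing `a = αᵖ`, `b = βᵖ`, the element
`e = [α + β] - [α] - [β]` lies in `I`, so `e² ∈ J`, and in `ℤR ⧸ J`, where `p = 0`, raising
`[α + β] = [α] + [β] + e` to the `p`-th power gives `[a + b] = [a] + [b]`. Hence `x ↦ x mod J`
factors through `π`, i.e. `I ≤ I² + (p)`. Since `p ∈ I`, iterating this inclusion gives
`Iᵐ ≤ Iᵐ⁺¹ + (pᵐ)` for all `m`, and therefore `Iⁿ = I^ν + (pⁿ)` for `ν ≥ n`.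
-/

theorem add_pow_prime_of_natCast_eq_zero {A : Type*} [CommRing A] {p : ℕ} (hp : p.Prime)
    (hpA : (p : A) = 0) (x y : A) : (x + y) ^ p = x ^ p + y ^ p := by
  obtain ⟨r, hr⟩ := exists_add_pow_prime_eq hp x y
  simp [hr, hpA]

namespace Ideal

variable {A : Type*} [CommRing A] {I K : Ideal A}

theorem pow_le_pow_succ_sup_pow (hI : I ≤ I ^ 2 ⊔ K) (hK : K ≤ I) (m : ℕ) :
    I ^ m ≤ I ^ (m + 1) ⊔ K ^ m := by
  induction m with
  | zero => simp
  | succ m ih =>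
    have hKI : K ^ m * I ^ 2 ≤ I ^ (m + 2) :=
      (mul_mono_left (pow_right_mono hK m)).trans_eq (pow_add I m 2).symm
    calc I ^ (m + 1) = I ^ m * I := pow_succ I m
      _ ≤ (I ^ (m + 1) ⊔ K ^ m) * I := mul_mono_left ih
      _ = I ^ (m + 2) ⊔ K ^ m * I := by rw [sup_mul, ← pow_succ]
      _ ≤ I ^ (m + 2) ⊔ K ^ m * (I ^ 2 ⊔ K) := sup_le_sup_left (mul_mono_right hI) _
      _ = I ^ (m + 2) ⊔ K ^ m * I ^ 2 ⊔ K ^ (m + 1) := by rw [mul_sup, ← pow_succ, sup_assoc]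
      _ ≤ I ^ (m + 2) ⊔ K ^ (m + 1) := sup_le_sup_right (sup_le le_rfl hKI) _

theorem pow_eq_pow_sup_pow_of_le (hI : I ≤ I ^ 2 ⊔ K) (hK : K ≤ I) {n ν : ℕ} (hnν : n ≤ ν) :
    I ^ n = I ^ ν ⊔ K ^ n := by
  induction ν, hnν using Nat.le_induction with
  | base => exact (sup_eq_left.2 (pow_right_mono hK n)).symm
  | succ ν hnν ih =>
    refine le_antisymm ?_ (sup_le (pow_le_pow_right (by omega)) (pow_right_mono hK n))
    calc I ^ n = I ^ ν ⊔ K ^ n := ih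
      _ ≤ I ^ (ν + 1) ⊔ K ^ ν ⊔ K ^ n := sup_le_sup_right (pow_le_pow_succ_sup_pow hI hK ν) _
      _ = I ^ (ν + 1) ⊔ K ^ n := by
        rw [sup_assoc, sup_eq_right.2 (pow_le_pow_right hnν : K ^ ν ≤ K ^ n)]

end Ideal

section

variable {R : Type*} [CommRing R]

theorem Iid_le_ker_of_map_of_add {S : Type*} [CommRing S] (f : ZR R →+* S)
    (hf : ∀ a b, f (of ℤ R (a + b)) = f (of ℤ R a) + f (of ℤ R b)) :
    Iid R ≤ RingHom.ker f := by
  let g : R →+ S := AddMonoidHom.mk' (fun r => f (of ℤ R r)) hf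
  have hfg : f.toAddMonoidHom = g.comp (piHom R).toAddMonoidHom := by
    ext r
    simp [g, ← of_apply, piHom_of]
  intro x (hx : piHom R x = 0)
  simpa [hx] using DFunLike.congr_fun hfg x

variable (p : ℕ) [Fact p.Prime] [CharP R p]

theorem quotient_mk_of_add (hsurj : Function.Surjective fun x : R => x ^ p) (a b : R) :
    Ideal.Quotient.mk (Iid R ^ 2 ⊔ Ideal.span {(p : ZR R)}) (of ℤ R (a + b)) =
      Ideal.Quotient.mk (Iid R ^ 2 ⊔ Ideal.span {(p : ZR R)}) (of ℤ R a) +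
        Ideal.Quotient.mk (Iid R ^ 2 ⊔ Ideal.span {(p : ZR R)}) (of ℤ R b) := by
  set mk := Ideal.Quotient.mk (Iid R ^ 2 ⊔ Ideal.span {(p : ZR R)})
  have hp : p.Prime := Fact.out
  have hp0 : (p : ZR R ⧸ Iid R ^ 2 ⊔ Ideal.span {(p : ZR R)}) = 0 := by
    rw [← map_natCast mk, Ideal.Quotient.eq_zero_iff_mem]
    exact Ideal.mem_sup_right (Ideal.mem_span_singleton_self _)
  obtain ⟨α, rfl⟩ := hsurj a
  obtain ⟨β, rfl⟩ := hsurj b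
  set e := of ℤ R (α + β) - of ℤ R α - of ℤ R β
  have he : e ∈ Iid R := by
    simp only [e, Iid, RingHom.mem_ker, map_sub, piHom_of]
    ring
  have he2 : mk e ^ 2 = 0 := by
    rw [← map_pow, Ideal.Quotient.eq_zero_iff_mem]
    exact Ideal.mem_sup_left (Ideal.pow_mem_pow he 2)
  calc mk (of ℤ R (α ^ p + β ^ p)) = mk (of ℤ R (α + β)) ^ p := by
        rw [← add_pow_char, map_pow, map_pow]
    _ = (mk (of ℤ R α) + mk (of ℤ R β) + mk e) ^ p := by
        rw [← map_add, ← map_add]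
        congr 2
        simp only [e]
        abel
    _ = mk (of ℤ R (α ^ p)) + mk (of ℤ R (β ^ p)) := by
        rw [add_pow_prime_of_natCast_eq_zero hp hp0, add_pow_prime_of_natCast_eq_zero hp hp0,
          pow_eq_zero_of_le hp.two_le he2, add_zero, map_pow, map_pow, map_pow, map_pow]

theorem Iid_le_sq_sup_span (hsurj : Function.Surjective fun x : R => x ^ p) :
    Iid R ≤ Iid R ^ 2 ⊔ Ideal.span {(p : ZR R)} := by
  simpa only [Ideal.mk_ker] using Iid_le_ker_of_map_of_add _ (quotient_mk_of_add p hsurj)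

end

theorem statement2_general (p : ℕ) [Fact p.Prime] (R : Type*) [CommRing R] [CharP R p]
    (hperf : Function.Bijective fun x : R => x ^ p)
    (n : ℕ) :
    ∀ ν : ℕ, n ≤ ν → Iid R ^ n = Iid R ^ ν ⊔ Ideal.span {(p : ZR R) ^ n} := by
  intro ν hnν
  rw [← Ideal.span_singleton_pow]
  exact Ideal.pow_eq_pow_sup_pow_of_le (Iid_le_sq_sup_span p hperf.2)
    (Ideal.span_singleton_le_iff_mem _ |>.2 (natCast_mem_Iid p)) hnν

/-- Let `p` be a prime, `R` a perfect `𝔽_p`-algebra and `n ≥ 1`.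
Then for every `ν ≥ n` one has `I^n = I^ν + p^n·ℤR` as ideals of `ℤR`. -/
theorem statement2 (p : ℕ) [Fact p.Prime] (R : Type*) [CommRing R] [CharP R p]
    (hperf : Function.Bijective fun x : R => x ^ p)
    (n : ℕ) (hn : 1 ≤ n) :
    ∀ ν : ℕ, n ≤ ν → Iid R ^ n = Iid R ^ ν ⊔ Ideal.span {(p : ZR R) ^ n} :=
  statement2_general p R hperf n
end

section
/- Let R be a commutative ring. The kernel I of the ring homomorphism π : ℤR → R is generated as a ℤ-module (equivalently, as an additive group) by the elements [r] + [s] − [r+s] for r, s ∈ R. -/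
/-!
Let `S` be the subgroup generated by the defects `[r] + [s] - [r + s]`. Modulo `S` the map
`r ↦ [r]` becomes additive, so `x ↦ x mod S` and `x ↦ [π x] mod S` are additive maps
`ℤR → ℤR ⧸ S` agreeing on the basis elements `[r]`. Hence `x ≡ [π x] mod S`, and for `x ∈ I`
this gives `x ≡ [0] ∈ S`. Conversely `π` kills every generator.
-/

open MonoidAlgebra

section AdditivityDefects

variable {A M : Type*} [AddZeroClass A] [AddCommGroup M]

def additivityDefects (f : A → M) : AddSubgroup M :=
  AddSubgroup.closure {y | ∃ a b, y = f a + f b - f (a + b)}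

lemma add_sub_apply_add_mem_additivityDefects (f : A → M) (a b : A) :
    f a + f b - f (a + b) ∈ additivityDefects f :=
  AddSubgroup.subset_closure ⟨a, b, rfl⟩

lemma apply_zero_mem_additivityDefects (f : A → M) : f 0 ∈ additivityDefects f := by
  simpa using add_sub_apply_add_mem_additivityDefects f 0 0

def additivityDefects.toQuotient (f : A → M) : A →+ M ⧸ additivityDefects f :=
  AddMonoidHom.mk' (fun a => (f a : M ⧸ additivityDefects f)) fun a b => by
    rw [← QuotientAddGroup.mk_add, QuotientAddGroup.eq_iff_sub_mem, ← neg_sub]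
    exact neg_mem (add_sub_apply_add_mem_additivityDefects f a b)

@[simp]
lemma additivityDefects.toQuotient_apply (f : A → M) (a : A) :
    additivityDefects.toQuotient f a = (f a : M ⧸ additivityDefects f) := rfl

end AdditivityDefects

section PiHom

variable (R : Type*) [CommRing R]

@[simp]
lemma piHom_single (r : R) (n : ℤ) : piHom R (single r n) = n • r := by
  simp [piHom, lift_apply]

lemma sub_of_piHom_mem_additivityDefects (x : ZR R) :
    x - of ℤ R (piHom R x) ∈ additivityDefects (of ℤ R) := by
  have hcomp : QuotientAddGroup.mk' (additivityDefects (of ℤ R)) =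
      (additivityDefects.toQuotient (of ℤ R)).comp (piHom R).toAddMonoidHom := by
    ext r
    simp
  rw [← QuotientAddGroup.eq_iff_sub_mem]
  exact DFunLike.congr_fun hcomp x

lemma ker_piHom_le_additivityDefects :
    (piHom R).toAddMonoidHom.ker ≤ additivityDefects (of ℤ R) := fun x hx => by
  have hsub := sub_of_piHom_mem_additivityDefects R x
  rw [show piHom R x = 0 from hx] at hsub
  simpa only [sub_add_cancel] using add_mem hsub (apply_zero_mem_additivityDefects (of ℤ R))

lemma additivityDefects_le_ker_piHom :
    additivityDefects (of ℤ R) ≤ (piHom R).toAddMonoidHom.ker := by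
  rw [additivityDefects, AddSubgroup.closure_le]
  rintro _ ⟨r, s, rfl⟩
  simp

end PiHom

/-- For a commutative ring `R`, the kernel `I` of `π : ℤR → R` is generated,
as an additive group (equivalently as a `ℤ`-module), by the elements `[r] + [s] - [r+s]`. -/
theorem statement3 (R : Type*) [CommRing R] (x : ZR R) :
    x ∈ RingHom.ker (piHom R) ↔
      x ∈ AddSubgroup.closure
        {y : ZR R | ∃ r s : R, y = of ℤ R r + of ℤ R s - of ℤ R (r + s)} :=
  ⟨fun hx => ker_piHom_le_additivityDefects R hx, fun hx => additivityDefects_le_ker_piHom R hx⟩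
end

section
/- Let p be a prime and R a commutative ring with p·1_R = 0, and let I = ker(π : ℤR → R). Then for every n ≥ 1: (i) δ(I^n) ⊆ I^{n−1}, and (ii) if x, y ∈ ℤR and at least one of x, y lies in I^n, then δ(x+y) ≡ δ(x) + δ(y) mod I^n. -/
open MonoidAlgebra

/-- `F : ℤR → ℤR`, the ring homomorphism induced by the multiplicative map `r ↦ [r^p]`. -/
noncomputable def Fr (p : ℕ) (R : Type*) [CommRing R] : ZR R →+* ZR R :=
  MonoidAlgebra.mapDomainRingHom ℤ (powMonoidHom p : R →* R)

/-!
Write `F(x) = x^p + p·δ(x)`. Expanding `(x + y)^p` and `(ab)^p = a^p b^p` gives, after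
cancelling `p` in the torsion-free ring `ℤR`,
`δ(x + y) = δ(x) + δ(y) - Σ_{0<k<p} (C(p,k)/p) x^k y^(p-k)` and
`δ(ab) = F(a) δ(b) + δ(a) b^p`.
Every term of the sum contains a positive power of `x` and of `y`, which gives (ii) for any ideal.
Part (i) follows by induction on `n`, writing elements of `I^(n+1)` as sums of products
`a b` with `a ∈ I`, `b ∈ I^n`, and using the product rule together with `F(I) ⊆ I`,
which holds because `F` lifts the Frobenius of `R` along `π`.
-/

instance MonoidAlgebra.isAddTorsionFree {k G : Type*} [Semiring k] [IsAddTorsionFree k] :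
    IsAddTorsionFree (MonoidAlgebra k G) where
  nsmul_right_injective n hn x y hxy := by
    ext g
    exact nsmul_right_injective hn (by simpa using congr(($hxy).coeff g))

theorem natCast_mul_right_injective {A : Type*} [NonAssocSemiring A] [IsAddTorsionFree A]
    {n : ℕ} (hn : n ≠ 0) : Function.Injective ((n : A) * ·) := by
  simpa only [nsmul_eq_mul] using nsmul_right_injective (M := A) hn

def IsArithDerivation {A : Type*} [CommRing A] (p : ℕ) (F : A →+* A) (δ : A → A) : Prop :=
  ∀ x, (p : A) * δ x = F x - x ^ p

namespace IsArithDerivation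

variable {A : Type*} [CommRing A] [IsAddTorsionFree A] {p : ℕ} {F : A →+* A} {δ : A → A}

theorem add_sub_sub (hp : p.Prime) (hδ : IsArithDerivation p F δ) (x y : A) :
    δ (x + y) - δ x - δ y =
      -∑ k ∈ Finset.Ioo 0 p, x ^ k * y ^ (p - k) * ((p.choose k / p : ℕ) : A) := by
  apply natCast_mul_right_injective hp.ne_zero
  linear_combination hδ (x + y) - hδ x - hδ y - add_pow_prime_eq' hp x y + map_add F x y

theorem add_sub_sub_mem (hp : p.Prime) (hδ : IsArithDerivation p F δ) (J : Ideal A) {x y : A}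
    (h : x ∈ J ∨ y ∈ J) : δ (x + y) - δ x - δ y ∈ J := by
  rw [hδ.add_sub_sub hp]
  refine neg_mem (J.sum_mem fun k hk => ?_)
  rw [Finset.mem_Ioo] at hk
  rcases h with hx | hy
  · exact J.mul_mem_right _ (J.mul_mem_right _ (J.pow_mem_of_mem hx k hk.1))
  · exact J.mul_mem_right _ (J.mul_mem_left _ (J.pow_mem_of_mem hy _ (Nat.sub_pos_of_lt hk.2)))

theorem mul (hp : p ≠ 0) (hδ : IsArithDerivation p F δ) (a b : A) :
    δ (a * b) = F a * δ b + δ a * b ^ p := by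
  apply natCast_mul_right_injective hp
  linear_combination hδ (a * b) - F a * hδ b - b ^ p * hδ a + map_mul F a b

theorem mem_pow_of_mem_pow_succ (hp : p.Prime) (hδ : IsArithDerivation p F δ) {J : Ideal A}
    (hFJ : J ≤ J.comap F) (m : ℕ) : ∀ x ∈ J ^ (m + 1), δ x ∈ J ^ m := by
  induction m with
  | zero => simp [Ideal.one_eq_top]
  | succ m ih =>
    intro x hx
    rw [pow_succ'] at hx
    induction hx using Submodule.mul_induction_on' with
    | mem_mul_mem a ha b hb =>
      rw [hδ.mul hp.ne_zero]
      refine add_mem ?_ (Ideal.mul_mem_left _ _ (Ideal.pow_mem_of_mem _ hb p hp.pos))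
      rw [pow_succ']
      exact Ideal.mul_mem_mul (hFJ ha) (ih b hb)
    | add u hu v _ hδu hδv =>
      have hcross := hδ.add_sub_sub_mem hp (J ^ (m + 1)) (y := v) (.inl (Ideal.mul_le_right hu))
      convert add_mem (add_mem hcross hδu) hδv using 1
      ring

end IsArithDerivation

theorem piHom_comp_Fr (p : ℕ) [Fact p.Prime] (R : Type*) [CommRing R] [CharP R p] :
    (piHom R).comp (Fr p R) = (frobenius R p).comp (piHom R) := by
  apply MonoidAlgebra.ringHom_ext
  · intro b
    simp [piHom, Fr, map_intCast]
  · intro a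
    simp [piHom, Fr, frobenius_def, powMonoidHom]

theorem Iid_le_comap_Fr (p : ℕ) [Fact p.Prime] (R : Type*) [CommRing R] [CharP R p] :
    Iid R ≤ (Iid R).comap (Fr p R) := by
  intro x hx
  rw [Ideal.mem_comap, Iid, RingHom.mem_ker, ← RingHom.comp_apply, piHom_comp_Fr,
    RingHom.comp_apply, (RingHom.mem_ker).1 hx, map_zero]

/-- Let `p` be a prime, `R` a commutative ring with `p·1_R = 0`,
`I = ker (π : ℤR → R)`, and `δ` the arithmetic derivation (`p·δ(x) = F(x) - x^p`). Then for
every `n ≥ 1`: (i) `δ(I^n) ⊆ I^(n-1)`, and (ii) if at least one of `x, y` lies in `I^n` then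
`δ(x+y) ≡ δ(x) + δ(y)  (mod I^n)`. -/
theorem statement6 (p : ℕ) [Fact p.Prime] (R : Type*) [CommRing R] [CharP R p]
    (δ : ZR R → ZR R) (hδ : ∀ x : ZR R, (p : ZR R) * δ x = Fr p R x - x ^ p)
    (n : ℕ) (hn : 1 ≤ n) :
    (∀ x ∈ Iid R ^ n, δ x ∈ Iid R ^ (n - 1)) ∧
    (∀ x y : ZR R, x ∈ Iid R ^ n ∨ y ∈ Iid R ^ n →
      δ (x + y) - δ x - δ y ∈ Iid R ^ n) := by
  have hp : p.Prime := Fact.out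
  have hδ' : IsArithDerivation p (Fr p R) δ := hδ
  obtain ⟨m, rfl⟩ : ∃ m, n = m + 1 := ⟨n - 1, by omega⟩
  exact ⟨hδ'.mem_pow_of_mem_pow_succ hp (Iid_le_comap_Fr p R) m,
    fun x y => hδ'.add_sub_sub_mem hp _⟩
end
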